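/- Let 𝒢 be an e-graph, G its converted circuit, and φ a satisfying extraction of 𝒢. Then the function α_φ (defined by α_φ(x_u) = α_φ(∧_u) = 1 iff φ(C) = u where C is the class of u, and α_φ(∨_C) = 1 iff C ∈ dom(φ)) is a valid evaluation of G. -/
import Mathlib


/-- Gate types for a monotone circuit. -/
inductive Gate where
  | AND : Gate
  | OR : Gate
deriving DecidableEq

/-- A weighted cyclic monotone circuit: a directed graph with a set of outputs,
a gate-type function, and a cost function (costs are only meaningful on inputs). -/
structure Circuit (V : Type) where
  edge : V → V → Prop
  isOut : V → Prop
  gate : V → Gate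
  cost : V → ℝ

namespace Circuit

variable {V : Type}

/-- The inputs are the vertices of in-degree 0. -/
def IsInput (G : Circuit V) (u : V) : Prop := ∀ v, ¬ G.edge v u

/-- A valid evaluation: each non-input gate evaluates to its gate function applied to
the values of its in-neighbors. -/
def Valid (G : Circuit V) (α : V → Bool) : Prop :=
  ∀ u : V, ¬ G.IsInput u →
    (α u = true ↔
      match G.gate u with
      | Gate.AND => ∀ v, G.edge v u → α v = true
      | Gate.OR => ∃ v, G.edge v u ∧ α v = true)

/-- An evaluation satisfies the circuit if it is 1 on all outputs. -/
def Satisfies (G : Circuit V) (α : V → Bool) : Prop :=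
  ∀ u, G.isOut u → α u = true

/-- The restriction `α|_A`: equal to `α` on `A` and `0` (false) elsewhere. -/
noncomputable def restrict (α : V → Bool) (A : Set V) : V → Bool :=
  fun u => @ite _ (u ∈ A) (Classical.propDecidable _) (α u) false

/-- A minimal satisfying evaluation: valid, satisfying, and no restriction of its
true set to a proper subset is a valid satisfying evaluation. -/
def MinSat (G : Circuit V) (α : V → Bool) : Prop :=
  G.Valid α ∧ G.Satisfies α ∧
    ∀ A : Set V, A ⊂ {u | α u = true} →
      ¬ (G.Valid (restrict α A) ∧ G.Satisfies (restrict α A))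

/-- `α` is acyclic if the subgraph `G[α]` induced by the true vertices has no
directed cycle. -/
def EvalAcyclic (G : Circuit V) (α : V → Bool) : Prop :=
  ∀ u, ¬ Relation.TransGen (fun a b => G.edge a b ∧ α a = true ∧ α b = true) u u

end Circuit

/-- An e-graph: a finite set `N` of e-nodes partitioned into e-classes (indexed by the
type `C`, via the surjective class map `cls`), a dependency relation `edge ⊆ N × C`,
a set of output classes, and a cost function. -/
structure EGraph (N C : Type) where
  cls : N → C
  surj : Function.Surjective cls
  edge : N → C → Prop
  isOut : C → Prop
  cost : N → ℝ

namespace EGraph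

variable {N C : Type}

/-- An extraction, modeled as a partial function `C → Option N`: a choice function
(on its domain) closed under dependencies. -/
def IsExtraction (𝒢 : EGraph N C) (φ : C → Option N) : Prop :=
  (∀ D u, φ D = some u → 𝒢.cls u = D) ∧
  (∀ D u D', φ D = some u → 𝒢.edge u D' → (φ D').isSome)

/-- A satisfying extraction: an extraction whose domain contains all output classes. -/
def SatExtraction (𝒢 : EGraph N C) (φ : C → Option N) : Prop :=
  𝒢.IsExtraction φ ∧ ∀ D, 𝒢.isOut D → (φ D).isSome

/-- The restriction `φ|_𝒜` of an extraction to a set of classes. -/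
noncomputable def restrictExt (φ : C → Option N) (𝒜 : Set C) : C → Option N :=
  fun D => @ite _ (D ∈ 𝒜) (Classical.propDecidable _) (φ D) none

/-- A minimally satisfying extraction: satisfying, and no restriction to a proper
subset of its domain is a satisfying extraction. -/
def MinSatExtraction (𝒢 : EGraph N C) (φ : C → Option N) : Prop :=
  𝒢.SatExtraction φ ∧
    ∀ 𝒜 : Set C, 𝒜 ⊂ {D | (φ D).isSome = true} →
      ¬ 𝒢.SatExtraction (restrictExt φ 𝒜)

/-- An extraction is acyclic if there is no (nontrivial) selected path from a class
to itself. -/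
def ExtAcyclic (𝒢 : EGraph N C) (φ : C → Option N) : Prop :=
  ∀ D, ¬ Relation.TransGen (fun D₁ D₂ => ∃ u, φ D₁ = some u ∧ 𝒢.edge u D₂) D D

/-- Vertices of the converted circuit: an input `x_u` and an AND gate `∧_u` for each
e-node `u`, and an OR gate `∨_D` for each e-class `D`. -/
inductive Vtx (N C : Type) where
  | x : N → Vtx N C
  | and : N → Vtx N C
  | or : C → Vtx N C

/-- The converted circuit of an e-graph: edges `(∧_u, ∨_D)` for `u ∈ D`,
`(∨_D, ∧_u)` for `(u, D) ∈ ℰ`, and `(x_u, ∧_u)`; outputs `∨_D` for output classes `D`;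
gate types AND on `∧_u`, OR on `∨_D`; cost `c(x_u) = c(u)`. -/
def conv (𝒢 : EGraph N C) : Circuit (Vtx N C) where
  edge a b :=
    match a, b with
    | .and u, .or D => 𝒢.cls u = D
    | .or D, .and u => 𝒢.edge u D
    | .x u, .and v => u = v
    | _, _ => False
  isOut a :=
    match a with
    | .or D => 𝒢.isOut D
    | _ => False
  gate a :=
    match a with
    | .or _ => Gate.OR
    | _ => Gate.AND
  cost a :=
    match a with
    | .x u => 𝒢.cost u
    | _ => 0

/-- The evaluation `α_φ` associated to an extraction `φ`:
`α_φ(x_u) = α_φ(∧_u) = 1` iff `φ(cls u) = u`, and `α_φ(∨_D) = 1` iff `D ∈ dom φ`. -/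
noncomputable def evalOf (𝒢 : EGraph N C) (φ : C → Option N) : Vtx N C → Bool :=
  fun a =>
    match a with
    | .x u => @decide (φ (𝒢.cls u) = some u) (Classical.propDecidable _)
    | .and u => @decide (φ (𝒢.cls u) = some u) (Classical.propDecidable _)
    | .or D => (φ D).isSome

/-- The extraction `φ_α` associated to an evaluation `α`:
`D ∈ dom φ_α` and `φ_α(D) = u` iff `u ∈ D` and `α(∧_u) = 1`. -/
noncomputable def extOf (𝒢 : EGraph N C) (α : Vtx N C → Bool) : C → Option N :=
  fun D =>
    @dite _ (∃ u, 𝒢.cls u = D ∧ α (Vtx.and u) = true) (Classical.propDecidable _)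
      (fun h => some h.choose) (fun _ => none)

end EGraph

/-- for a satisfying extraction `φ` of an e-graph, the associated
function `α_φ` is a valid evaluation of the converted circuit. -/
theorem stmt2 {N C : Type} [Fintype N] [Fintype C] (𝒢 : EGraph N C)
    (φ : C → Option N) (hφ : 𝒢.SatExtraction φ) :
    (𝒢.conv).Valid (𝒢.evalOf φ) := by
  obtain ⟨⟨hcls, hclosed⟩, hout⟩ := hφ
  intro v hv
  match v with
  | .x u => exact absurd (fun w h => by cases w <;> simp [EGraph.conv] at h) hv
  | .and u =>
    simp only [EGraph.conv, EGraph.evalOf, decide_eq_true_eq]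
    constructor
    · intro h w hw
      match w with
      | .x v => simp [EGraph.conv] at hw; subst hw
                simp [EGraph.evalOf, h]
      | .and v => simp [EGraph.conv] at hw
      | .or D => simp [EGraph.conv] at hw
                 simp [EGraph.evalOf, hclosed _ _ _ h hw]
    · intro h
      have := h (.x u) (by simp [EGraph.conv])
      simpa [EGraph.evalOf] using this
  | .or D =>
    simp only [EGraph.conv, EGraph.evalOf]
    constructor
    · intro h
      rw [Option.isSome_iff_exists] at h
      obtain ⟨u, hu⟩ := h
      refine ⟨.and u, ?_, ?_⟩
      · simp [EGraph.conv, hcls _ _ hu]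
      · have := hcls _ _ hu
        simp [EGraph.evalOf]
        rw [this]; exact hu
    · rintro ⟨w, hw, haw⟩
      match w with
      | .x v => simp [EGraph.conv] at hw
      | .and v =>
        simp [EGraph.conv] at hw
        simp [EGraph.evalOf] at haw
        rw [hw] at haw
        simp [haw]
      | .or E => simp [EGraph.conv] at hw
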